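/- For a distribution of the form P = (1-ε, q_1 ε, q_2 ε, ..., q_{n-1} ε) on n symbols, where Q = (q_1,...,q_{n-1}) is a probability distribution and 0 < ε < 1, the AUH redundancy satisfies R(P) = 1 - h(ε) + ε·R(Q), where h is the binary entropy function, L and H are computed with anti-uniform lengths on n and n-1 symbols respectively. -/

import Mathlib

open Finset

/-- Average length of the anti-uniform code on `m` symbols. -/
noncomputable def avgLen (m : ℕ) (p : ℕ → ℝ) : ℝ :=
  ∑ i ∈ Finset.Icc 1 (m - 1), (i : ℝ) * p i + ((m : ℝ) - 1) * p m

/-- Entropy (base 2) of a distribution on symbols `1,…,m`. -/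
noncomputable def entropy (m : ℕ) (p : ℕ → ℝ) : ℝ :=
  -∑ i ∈ Finset.Icc 1 m, p i * Real.logb 2 (p i)

/-- Redundancy `R = L - H` of the anti-uniform code on `m` symbols. -/
noncomputable def redundancy (m : ℕ) (p : ℕ → ℝ) : ℝ :=
  avgLen m p - entropy m p

/-- Binary entropy function (base 2). -/
noncomputable def binEnt (x : ℝ) : ℝ :=
  -x * Real.logb 2 x - (1 - x) * Real.logb 2 (1 - x)

/-!
`P` is `Q` scaled by `ε`, shifted one symbol to the right, with the new first symbol of
probability `1 - ε`. Every anti-uniform length of `P` after the first is one more than the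
corresponding length of `Q` (including the repeated last one), so `L(P) = (1 - ε) + ε (L(Q) + 1)`.
The entropy obeys the grouping rule `H(P) = h(ε) + ε H(Q)`, which rests on
`xy log(xy) = y · x log x + x · y log y`.
-/

lemma sum_Icc_one_succ {M : Type*} [AddCommMonoid M] (m : ℕ) (f : ℕ → M) :
    ∑ i ∈ Icc 1 (m + 1), f i = f 1 + ∑ i ∈ Icc 1 m, f (i + 1) := by
  induction m with
  | zero => simp
  | succ m ih => rw [sum_Icc_succ_top (by omega), ih, sum_Icc_succ_top (by omega), add_assoc]

lemma Real.mul_logb_mul (b x y : ℝ) :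
    x * y * Real.logb b (x * y) = y * (x * Real.logb b x) + x * (y * Real.logb b y) := by
  have h := Real.negMulLog_mul x y
  simp only [Real.negMulLog, Real.logb, div_eq_mul_inv] at h ⊢
  linear_combination -(Real.log b)⁻¹ * h

def prepend (a : ℝ) (r : ℕ → ℝ) : ℕ → ℝ := fun i => if i = 1 then a else r (i - 1)

lemma sum_Icc_prepend (m : ℕ) (a : ℝ) (r : ℕ → ℝ) (f : ℕ → ℝ → ℝ) :
    ∑ i ∈ Icc 1 (m + 1), f i (prepend a r i) = f 1 a + ∑ i ∈ Icc 1 m, f (i + 1) (r i) := by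
  rw [sum_Icc_one_succ]
  congr 1
  refine sum_congr rfl fun i hi => ?_
  simp [prepend, Nat.one_le_iff_ne_zero.mp (mem_Icc.mp hi).1]

lemma avgLen_prepend {m : ℕ} (hm : 1 ≤ m) (a : ℝ) (r : ℕ → ℝ) :
    avgLen (m + 1) (prepend a r) = a + avgLen m r + ∑ i ∈ Icc 1 m, r i := by
  obtain ⟨k, rfl⟩ : ∃ k, m = k + 1 := ⟨m - 1, by omega⟩
  have hlast : prepend a r (k + 2) = r (k + 1) := rfl
  simp only [avgLen, Nat.add_sub_cancel, sum_Icc_prepend k a r fun i x => (i : ℝ) * x, hlast,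
    sum_Icc_succ_top (by omega : 1 ≤ k + 1), Nat.cast_add, Nat.cast_one, add_mul, one_mul,
    sum_add_distrib]
  ring

lemma entropy_prepend (m : ℕ) (a : ℝ) (r : ℕ → ℝ) :
    entropy (m + 1) (prepend a r) = -a * Real.logb 2 a + entropy m r := by
  rw [entropy, entropy, sum_Icc_prepend m a r fun _ x => x * Real.logb 2 x]
  ring

lemma avgLen_mul_const (m : ℕ) (p : ℕ → ℝ) (c : ℝ) :
    avgLen m (fun i => p i * c) = avgLen m p * c := by
  simp only [avgLen, add_mul, sum_mul, mul_assoc]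

lemma entropy_mul_const (m : ℕ) (p : ℕ → ℝ) (c : ℝ) :
    entropy m (fun i => p i * c) =
      entropy m p * c - (∑ i ∈ Icc 1 m, p i) * (c * Real.logb 2 c) := by
  simp only [entropy, Real.mul_logb_mul, sum_add_distrib, ← sum_mul, ← mul_sum]
  ring

theorem redundancy_split_general (n : ℕ) (q : ℕ → ℝ) (ε : ℝ)
    (hq1 : ∑ i ∈ Finset.Icc 1 (n - 1), q i = 1) :
    redundancy n (fun i => if i = 1 then 1 - ε else q (i - 1) * ε) =
      1 - binEnt ε + ε * redundancy (n - 1) q := by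
  have hn : 2 ≤ n := by
    by_contra h
    rw [Icc_eq_empty (by omega), sum_empty] at hq1
    exact zero_ne_one hq1
  obtain ⟨m, rfl⟩ : ∃ m, n = m + 1 := ⟨n - 1, by omega⟩
  rw [Nat.add_sub_cancel] at hq1 ⊢
  change redundancy (m + 1) (prepend (1 - ε) fun j => q j * ε) = _
  rw [redundancy, redundancy, avgLen_prepend (by omega), entropy_prepend, avgLen_mul_const,
    entropy_mul_const, ← sum_mul, hq1, binEnt]
  ring

/-- For `P = (1 - ε, q 1 · ε, …, q (n-1) · ε)` built from a probability distribution
`Q` on `n - 1` symbols, the anti-uniform redundancy satisfies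
`R(P) = 1 - h(ε) + ε R(Q)`. -/
theorem redundancy_split (n : ℕ) (hn : 3 ≤ n) (q : ℕ → ℝ) (ε : ℝ)
    (hε0 : 0 < ε) (hε1 : ε < 1)
    (hq0 : ∀ i ∈ Finset.Icc 1 (n - 1), 0 ≤ q i)
    (hq1 : ∑ i ∈ Finset.Icc 1 (n - 1), q i = 1) :
    redundancy n (fun i => if i = 1 then 1 - ε else q (i - 1) * ε) =
      1 - binEnt ε + ε * redundancy (n - 1) q :=
  redundancy_split_general n q ε hq1
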